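/- arXiv:1403.2019 — 2 statements merged into one kernel-verified Lean document; each statement's English description precedes it below -/
import Mathlib

section
/- For every fugacity Υ > 0 and every reheating ratio R ≥ 2, the integral ∫₀^∞ (e^y + 1)/(Υ⁻¹ e^{y/R} + 1)² dy diverges (equals +∞). Equivalently, the perturbation χ(y) = f_Υ(y)/f_ch(y) does not belong to the weighted space L²((0,∞), f_ch(y) dy). -/
/-!
For `R ≥ 2` we have `e^{y/R} ≤ e^{y/2}`, so `(Υ⁻¹ e^{y/R} + 1)² ≤ (Υ⁻¹ + 1)² e^y` on `y ≥ 0`.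
Hence the integrand `(e^y + 1)/(Υ⁻¹ e^{y/R} + 1)²` is bounded below by the positive constant
`(Υ⁻¹ + 1)⁻²` on the half-line, which has infinite measure. Since `χ² f_ch` is exactly this
integrand, `χ` cannot be square integrable against `f_ch dy`.
-/

open MeasureTheory Real Set
open scoped ENNReal

section Measure

variable {α : Type*} [MeasurableSpace α] {μ : Measure α}

lemma setLIntegral_ofReal_eq_top_of_const_le {s : Set α} (hs : MeasurableSet s) (hμs : μ s = ∞)
    {f : α → ℝ} {c : ℝ} (hc : 0 < c) (hcf : ∀ x ∈ s, c ≤ f x) :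
    ∫⁻ x in s, ENNReal.ofReal (f x) ∂μ = ∞ := by
  refine top_unique ?_
  calc ∞ = ∫⁻ _ in s, ENNReal.ofReal c ∂μ := by
        rw [setLIntegral_const, hμs, ENNReal.mul_top (ENNReal.ofReal_pos.mpr hc).ne']
    _ ≤ ∫⁻ x in s, ENNReal.ofReal (f x) ∂μ :=
        setLIntegral_mono' hs fun x hx => ENNReal.ofReal_le_ofReal (hcf x hx)

lemma MeasureTheory.MemLp.lintegral_ofReal_sq_mul_lt_top {f w : α → ℝ} (hw : Measurable w)
    (hw0 : ∀ x, 0 ≤ w x)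
    (hf : MemLp f 2 (μ.withDensity fun x => ENNReal.ofReal (w x))) :
    ∫⁻ x, ENNReal.ofReal (f x ^ 2 * w x) ∂μ < ∞ := by
  have hint := (integrable_withDensity_iff (by fun_prop)
    (Filter.Eventually.of_forall fun _ => ENNReal.ofReal_lt_top)).mp hf.integrable_sq
  simpa only [ENNReal.toReal_ofReal (hw0 _)] using hint.lintegral_lt_top

end Measure

lemma sq_one_div_div_one_div_mul_one_div {K : Type*} [Field K] (a b : K) :
    ((1 / b) / (1 / a)) ^ 2 * (1 / a) = a / b ^ 2 := by
  rcases eq_or_ne a 0 with rfl | ha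
  · simp
  · field_simp

lemma sq_mul_exp_div_add_one_le {a R y : ℝ} (ha : 0 ≤ a) (hR : 2 ≤ R) (hy : 0 ≤ y) :
    (a * exp (y / R) + 1) ^ 2 ≤ (a + 1) ^ 2 * exp y := by
  have hexp : exp (y / R) ≤ exp (y / 2) :=
    exp_le_exp.mpr (div_le_div_of_nonneg_left hy zero_lt_two hR)
  have hone : 1 ≤ exp (y / 2) := one_le_exp (by positivity)
  calc (a * exp (y / R) + 1) ^ 2 ≤ ((a + 1) * exp (y / 2)) ^ 2 := by
        gcongr
        nlinarith
    _ = (a + 1) ^ 2 * exp y := by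
        rw [mul_pow, ← exp_nat_mul]
        norm_num [mul_div_cancel₀]

lemma inv_add_one_sq_le_exp_add_one_div {a R y : ℝ} (ha : 0 ≤ a) (hR : 2 ≤ R) (hy : 0 ≤ y) :
    ((a + 1) ^ 2)⁻¹ ≤ (exp y + 1) / (a * exp (y / R) + 1) ^ 2 := by
  rw [le_div_iff₀ (by positivity), inv_mul_le_iff₀ (by positivity)]
  nlinarith [sq_mul_exp_div_add_one_le ha hR hy, sq_nonneg (a + 1)]

lemma lintegral_exp_add_one_div_eq_top {a R : ℝ} (ha : 0 ≤ a) (hR : 2 ≤ R) :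
    ∫⁻ y in Ioi (0 : ℝ), ENNReal.ofReal ((exp y + 1) / (a * exp (y / R) + 1) ^ 2) = ∞ :=
  setLIntegral_ofReal_eq_top_of_const_le measurableSet_Ioi volume_Ioi (by positivity)
    fun _ hy => inv_add_one_sq_le_exp_add_one_div ha hR (le_of_lt hy)

/-- For every fugacity `Υ > 0` and reheating ratio `R ≥ 2`, the integral
`∫₀^∞ (e^y + 1)/(Υ⁻¹ e^{y/R} + 1)² dy` diverges; equivalently the perturbation
`χ = f_Υ / f_ch` is not in `L²((0,∞), f_ch(y) dy)`. -/
theorem chi_not_in_L2_of_two_le_reheating (Υ R : ℝ) (hΥ : 0 < Υ) (hR : 2 ≤ R) :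
    (∫⁻ y in Ioi (0:ℝ),
      ENNReal.ofReal ((Real.exp y + 1) / (Υ⁻¹ * Real.exp (y / R) + 1) ^ 2) = ⊤)
    ∧ ¬ MemLp
        (fun y : ℝ => (1 / (Υ⁻¹ * Real.exp (y / R) + 1)) / (1 / (Real.exp y + 1))) 2
        ((volume.restrict (Ioi (0:ℝ))).withDensity
          fun y => ENNReal.ofReal (1 / (Real.exp y + 1))) := by
  have hdiverges := lintegral_exp_add_one_div_eq_top (inv_nonneg.mpr hΥ.le) hR
  refine ⟨hdiverges, fun hχ => ?_⟩
  have hfinite := hχ.lintegral_ofReal_sq_mul_lt_top (by fun_prop) fun y => by positivity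
  simp only [sq_one_div_div_one_div_mul_one_div, hdiverges] at hfinite
  exact lt_irrefl _ hfinite
end

section
/- Let a, T, T_eq: [0,∞) → (0,∞) be C¹, let Υ > 0, and set H(t) = a'(t)/a(t). Define f(z,t) = ∫₀ᵗ e^{s−t}/(Υ⁻¹ exp(a(t)T(t)z/(a(s)T_eq(s))) + 1) ds + e^{−t}/(exp(a(t)T(t)z/(a(0)T_eq(0))) + 1) for z > 0, t ≥ 0. Then f satisfies the partial differential equation ∂ₜ f(z,t) − z(H(t) + T'(t)/T(t)) ∂_z f(z,t) = 1/(Υ⁻¹ e^{zT(t)/T_eq(t)} + 1) − f(z,t), with initial condition f(z,0) = 1/(e^{zT(0)/T_eq(0)} + 1). -/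
open MeasureTheory Real Set Function

/-!
The comoving momentum `w = a T z` is constant along the characteristics of the transport
operator `∂ₜ - z (H + Ṫ/T) ∂_z`. Writing `φ_Υ(x) = 1/(Υ⁻¹ eˣ + 1)` and `d = a T_eq`, the
function is `f(z,t) = Φ(t, a(t) T(t) z)` with
`Φ(t,w) = e^{-t} (∫₀ᵗ eˢ φ_Υ(w/d(s)) ds + φ_1(w/d(0)))`, so the transport operator applied
to `f` is `∂ₜΦ`. By the Leibniz rule, `∂ₜΦ = φ_Υ(w/d(t)) - Φ`, and `w/d(t) = z T/T_eq`.
-/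

theorem hasDerivAt_integral_of_continuous_partial {g g' : ℝ → ℝ → ℝ}
    (hg : Continuous (uncurry g)) (hg' : Continuous (uncurry g'))
    (hderiv : ∀ s w, HasDerivAt (g s) (g' s w) w) (a b w₀ : ℝ) :
    HasDerivAt (fun w => ∫ s in a..b, g s w) (∫ s in a..b, g' s w₀) w₀ := by
  obtain ⟨C, hC⟩ := (isCompact_uIcc.prod (isCompact_closedBall w₀ 1)).exists_bound_of_continuousOn
    hg'.continuousOn
  refine (intervalIntegral.hasDerivAt_integral_of_dominated_loc_of_deriv_le
    (bound := fun _ => C) (Metric.ball_mem_nhds w₀ one_pos)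
    (Filter.Eventually.of_forall fun w => (hg.uncurry_right w).aestronglyMeasurable)
    ((hg.uncurry_right w₀).intervalIntegrable a b) (hg'.uncurry_right w₀).aestronglyMeasurable
    (ae_of_all _ fun s hs w hw => hC (s, w) ⟨uIoc_subset_uIcc hs, Metric.ball_subset_closedBall hw⟩)
    intervalIntegrable_const (ae_of_all _ fun s _ w _ => hderiv s w)).2

theorem hasDerivAt_integral_diagonal {G : ℝ → ℝ → ℝ} (hG : Continuous (uncurry G)) (t : ℝ) :
    HasDerivAt (fun τ => ∫ s in t..τ, G τ s) (G t t) t := by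
  rw [hasDerivAt_iff_isLittleO, Asymptotics.isLittleO_iff]
  intro ε hε
  obtain ⟨δ, hδ, hclose⟩ := Metric.continuousAt_iff.1 (hG.continuousAt (x := (t, t))) ε hε
  filter_upwards [Metric.ball_mem_nhds t hδ] with τ hτ
  have hbound : ∀ s ∈ uIoc t τ, ‖G τ s - G t t‖ ≤ ε := fun s hs => by
    have hst : dist s t ≤ dist τ t := abs_sub_left_of_mem_uIcc (uIoc_subset_uIcc hs)
    exact (hclose (x := (τ, s)) (max_lt hτ (hst.trans_lt hτ))).le
  have hsplit : (∫ s in t..τ, G τ s) - (∫ s in t..t, G t s) - (τ - t) • G t t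
      = ∫ s in t..τ, (G τ s - G t t) := by
    rw [intervalIntegral.integral_same, intervalIntegral.integral_sub
      ((hG.uncurry_left τ).intervalIntegrable _ _) intervalIntegrable_const,
      intervalIntegral.integral_const, sub_zero]
  rw [hsplit]
  simpa using intervalIntegral.norm_integral_le_of_norm_le_const hbound

theorem hasDerivAt_integral_comp {g g' : ℝ → ℝ → ℝ} {c : ℝ → ℝ} {c' : ℝ}
    (hg : Continuous (uncurry g)) (hg' : Continuous (uncurry g'))
    (hderiv : ∀ s w, HasDerivAt (g s) (g' s w) w) (hc : Continuous c) (a t : ℝ)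
    (hct : HasDerivAt c c' t) :
    HasDerivAt (fun τ => ∫ s in a..τ, g s (c τ))
      (g t (c t) + (∫ s in a..t, g' s (c t)) * c') t := by
  have hsplit : (fun τ => ∫ s in a..τ, g s (c τ))
      = fun τ => (∫ s in t..τ, g s (c τ)) + ∫ s in a..t, g s (c τ) := by
    funext τ
    rw [add_comm, intervalIntegral.integral_add_adjacent_intervals
      ((hg.uncurry_right _).intervalIntegrable _ _) ((hg.uncurry_right _).intervalIntegrable _ _)]
  rw [hsplit]
  exact (hasDerivAt_integral_diagonal (G := fun τ s => g s (c τ))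
    (hg.comp (continuous_snd.prodMk (hc.comp continuous_fst))) t).add
    ((hasDerivAt_integral_of_continuous_partial hg hg' hderiv a t (c t)).comp t hct)

theorem deriv_comp_mul_sub_mul_deriv {Φ : ℝ → ℝ → ℝ} {c : ℝ → ℝ} {c' Φw D t z : ℝ}
    (hct : c t ≠ 0) (hw : HasDerivAt (Φ t) Φw (c t * z))
    (hτ : HasDerivAt (fun τ => Φ τ (c τ * z)) (D + Φw * (c' * z)) t) :
    deriv (fun τ => Φ τ (c τ * z)) t - z * (c' / c t) * deriv (fun ζ => Φ t (c t * ζ)) z = D := by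
  have hz : HasDerivAt (fun ζ => Φ t (c t * ζ)) (Φw * (c t * 1)) z :=
    hw.comp z ((hasDerivAt_id' z).const_mul (c t))
  rw [hτ.deriv, hz.deriv]
  field_simp
  ring

theorem hasDerivAt_comp_div {k : ℝ → ℝ} (hk : Differentiable ℝ k) (d w : ℝ) :
    HasDerivAt (fun w => k (w / d)) (deriv k (w / d) / d) w := by
  have h := (hk (w / d)).hasDerivAt.comp w ((hasDerivAt_id' w).div_const d)
  rwa [mul_one_div] at h

noncomputable def fermiDirac (Υ x : ℝ) : ℝ := (Υ⁻¹ * exp x + 1)⁻¹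

theorem contDiff_fermiDirac {Υ : ℝ} (hΥ : 0 ≤ Υ) : ContDiff ℝ 1 (fermiDirac Υ) :=
  ((contDiff_const.mul contDiff_exp).add contDiff_const).inv fun x => by positivity

noncomputable def relaxationProfile (Υ : ℝ) (d : ℝ → ℝ) (τ w : ℝ) : ℝ :=
  exp (-τ) * ((∫ s in (0:ℝ)..τ, exp s * fermiDirac Υ (w / d s)) + fermiDirac 1 (w / d 0))

theorem exists_hasDerivAt_relaxationProfile {Υ : ℝ} (hΥ : 0 ≤ Υ) {d c : ℝ → ℝ}
    (hd : Continuous d) (hd0 : ∀ s, d s ≠ 0) (hc : Continuous c) {c' t : ℝ}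
    (hct : HasDerivAt c c' t) :
    ∃ Φw, HasDerivAt (relaxationProfile Υ d t) Φw (c t) ∧
      HasDerivAt (fun τ => relaxationProfile Υ d τ (c τ))
        (fermiDirac Υ (c t / d t) - relaxationProfile Υ d t (c t) + Φw * c') t := by
  have hk := contDiff_fermiDirac hΥ
  have hk_cont := hk.continuous
  have hk'_cont := hk.continuous_deriv le_rfl
  have hg : Continuous (uncurry fun s w => exp s * fermiDirac Υ (w / d s)) := by
    fun_prop (disch := exact fun p => hd0 p.1)
  have hg' : Continuous (uncurry fun s w => exp s * (deriv (fermiDirac Υ) (w / d s) / d s)) := by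
    fun_prop (disch := exact fun p => hd0 p.1)
  have hderiv : ∀ s w, HasDerivAt (fun w => exp s * fermiDirac Υ (w / d s))
      (exp s * (deriv (fermiDirac Υ) (w / d s) / d s)) w := fun s w =>
    (hasDerivAt_comp_div (hk.differentiable one_ne_zero) (d s) w).const_mul _
  have hb := hasDerivAt_comp_div
    ((contDiff_fermiDirac zero_le_one).differentiable one_ne_zero) (d 0) (c t)
  refine ⟨_, ((hasDerivAt_integral_of_continuous_partial hg hg' hderiv 0 t (c t)).add hb).const_mul
    (exp (-t)), ?_⟩
  refine ((hasDerivAt_neg t).exp.fun_mul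
    ((hasDerivAt_integral_comp hg hg' hderiv hc 0 t hct).fun_add (hb.comp t hct))).congr_deriv ?_
  simp only [relaxationProfile, exp_neg, Function.comp_apply]
  field_simp
  ring

/-- The explicit function
`f(z,t) = ∫₀ᵗ e^{s−t}/(Υ⁻¹ exp(a(t)T(t)z/(a(s)T_eq(s))) + 1) ds
          + e^{−t}/(exp(a(t)T(t)z/(a(0)T_eq(0))) + 1)`
satisfies the model relaxation Boltzmann equation in the variable `z = p/T(t)`:
`∂ₜf − z(H + Ṫ/T)∂_z f = 1/(Υ⁻¹ e^{zT/T_eq} + 1) − f`, with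
`f(z,0) = 1/(e^{zT(0)/T_eq(0)} + 1)`, where `H = ȧ/a`. -/
theorem model_relaxation_in_scaled_momentum
    (a T Teq : ℝ → ℝ) (Υ : ℝ)
    (ha : ContDiff ℝ 1 a) (hT : ContDiff ℝ 1 T) (hTeq : ContDiff ℝ 1 Teq)
    (hapos : ∀ t, 0 < a t) (hTpos : ∀ t, 0 < T t) (hTeqpos : ∀ t, 0 < Teq t)
    (hΥ : 0 < Υ)
    (f : ℝ → ℝ → ℝ)
    (hf : ∀ z t, f z t =
      (∫ s in (0:ℝ)..t,
        Real.exp (s - t) / (Υ⁻¹ * Real.exp (a t * T t * z / (a s * Teq s)) + 1))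
      + Real.exp (-t) / (Real.exp (a t * T t * z / (a 0 * Teq 0)) + 1)) :
    (∀ z : ℝ, 0 < z → ∀ t : ℝ, 0 ≤ t →
      deriv (fun τ => f z τ) t
        - z * (deriv a t / a t + deriv T t / T t) * deriv (fun ζ => f ζ t) z
      = 1 / (Υ⁻¹ * Real.exp (z * T t / Teq t) + 1) - f z t)
    ∧ (∀ z : ℝ, 0 < z → f z 0 = 1 / (Real.exp (z * T 0 / Teq 0) + 1)) := by
  have hf_eq : ∀ z τ, f z τ = relaxationProfile Υ (fun s => a s * Teq s) τ (a τ * T τ * z) :=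
    fun z τ => by
      rw [hf, relaxationProfile, mul_add, ← intervalIntegral.integral_const_mul]
      congr 1
      · refine intervalIntegral.integral_congr fun s _ => ?_
        simp only [fermiDirac, exp_sub, exp_neg]
        ring
      · simp [fermiDirac, div_eq_mul_inv]
  have hTeq_div : ∀ t z, a t * T t * z / (a t * Teq t) = z * T t / Teq t := fun t z => by
    field_simp [(hapos t).ne', (hTeqpos t).ne']
  refine ⟨fun z _ t _ => ?_, fun z _ => ?_⟩
  · have hc : HasDerivAt (fun τ => a τ * T τ) (deriv a t * T t + a t * deriv T t) t :=
      (ha.differentiable one_ne_zero t).hasDerivAt.mul (hT.differentiable one_ne_zero t).hasDerivAt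
    obtain ⟨Φw, hw, hτ⟩ := exists_hasDerivAt_relaxationProfile (d := fun s => a s * Teq s)
      (c := fun τ => a τ * T τ * z) hΥ.le
      (ha.continuous.mul hTeq.continuous) (fun s => (mul_pos (hapos s) (hTeqpos s)).ne')
      ((ha.continuous.mul hT.continuous).mul continuous_const) (hc.mul_const z)
    have hH : deriv a t / a t + deriv T t / T t
        = (deriv a t * T t + a t * deriv T t) / (a t * T t) := by
      field_simp [(hapos t).ne', (hTpos t).ne']
    simp only [hf_eq, hH]
    rw [deriv_comp_mul_sub_mul_deriv (c := fun τ => a τ * T τ) (mul_pos (hapos t) (hTpos t)).ne'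
      hw hτ, hTeq_div, fermiDirac, one_div]
  · rw [hf_eq, relaxationProfile, intervalIntegral.integral_same, ← hTeq_div]
    simp [fermiDirac]
end
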